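/- arXiv:1607.03842 — 3 statements merged into one kernel-verified Lean document; each statement's English description precedes it below -/
import Mathlib

section
/- Let P1 and P2 be two stochastic matrices on a finite state space, r1 and r2 two reward vectors, γ ∈ (0,1), and let v1 = (I - γP1)^{-1} r1 and v2 = (I - γP2)^{-1} r2 be the corresponding value functions. If rewards are bounded by R_max in absolute value and for every state x, ‖P1(·|x) - P2(·|x)‖_1 ≤ e(x), then componentwise (I - γP1)^{-1}(r1 - r2 - (γ R_max/(1-γ)) e) ≤ v1 - v2 ≤ (I - γP1)^{-1}(r1 - r2 + (γ R_max/(1-γ)) e). -/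
/-!
The difference `v₁ - v₂` is the value function of `P₁` for the reward
`r₁ - r₂ + γ (P₁ - P₂) v₂`, and the perturbation term is bounded in row `x` by
`γ e(x) ‖v₂‖∞ ≤ γ e(x) R_max / (1 - γ)`. Since `(I - γP₁)⁻¹` is monotone (at a minimum of `u`,
averaging with `P₁` cannot decrease `u`, so `(I - γP₁) u ≥ 0` forces `u ≥ 0`), the two-sided
bound on the reward transfers to `v₁ - v₂`.
-/

open Matrix

namespace Matrix

theorem abs_mulVec_apply_le {m n : Type*} [Fintype n] (M : Matrix m n ℝ) (v : n → ℝ) (x : m) :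
    |(M *ᵥ v) x| ≤ (∑ y, |M x y|) * ‖v‖ := by
  calc |(M *ᵥ v) x| = |∑ y, M x y * v y| := rfl
    _ ≤ ∑ y, |M x y| * |v y| := by
      simpa only [abs_mul] using Finset.abs_sum_le_sum_abs (fun y => M x y * v y) _
    _ ≤ ∑ y, |M x y| * ‖v‖ := by
      gcongr with y
      exact norm_le_pi_norm v y
    _ = (∑ y, |M x y|) * ‖v‖ := (Finset.sum_mul ..).symm

section Algebra

variable {X R : Type*} [Fintype X] [DecidableEq X] [CommRing R]

theorem one_sub_smul_mulVec (P : Matrix X X R) (γ : R) (v : X → R) :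
    (1 - γ • P) *ᵥ v = v - γ • (P *ᵥ v) := by
  rw [sub_mulVec, one_mulVec, smul_mulVec]

theorem one_sub_smul_mulVec_sub (P₁ P₂ : Matrix X X R) (γ : R) (v₁ v₂ : X → R) :
    (1 - γ • P₁) *ᵥ (v₁ - v₂)
      = (1 - γ • P₁) *ᵥ v₁ - (1 - γ • P₂) *ᵥ v₂ + γ • ((P₁ - P₂) *ᵥ v₂) := by
  rw [one_sub_smul_mulVec, one_sub_smul_mulVec, one_sub_smul_mulVec, sub_mulVec, mulVec_sub,
    smul_sub, smul_sub]
  abel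

end Algebra

variable {X : Type*} [Fintype X] [DecidableEq X] {P : Matrix X X ℝ} {γ : ℝ}

theorem norm_mulVec_le_of_mem_rowStochastic (hP : P ∈ rowStochastic ℝ X) (v : X → ℝ) :
    ‖P *ᵥ v‖ ≤ ‖v‖ := by
  refine (pi_norm_le_iff_of_nonneg (norm_nonneg v)).mpr fun x => ?_
  have hrow : ∑ y, |P x y| = 1 := by
    simp_rw [abs_of_nonneg (nonneg_of_mem_rowStochastic hP)]
    exact sum_row_of_mem_rowStochastic hP x
  simpa [hrow] using abs_mulVec_apply_le P v x

theorem one_sub_mul_norm_le_norm_one_sub_smul_mulVec (hP : P ∈ rowStochastic ℝ X)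
    (hγ : 0 ≤ γ) (v : X → ℝ) : (1 - γ) * ‖v‖ ≤ ‖(1 - γ • P) *ᵥ v‖ := by
  have hPv : ‖γ • (P *ᵥ v)‖ ≤ γ * ‖v‖ := by
    rw [norm_smul, Real.norm_of_nonneg hγ]
    exact mul_le_mul_of_nonneg_left (norm_mulVec_le_of_mem_rowStochastic hP v) hγ
  have := norm_sub_norm_le v (γ • (P *ᵥ v))
  rw [one_sub_smul_mulVec]
  linarith

theorem isUnit_det_one_sub_smul (hP : P ∈ rowStochastic ℝ X) (hγ0 : 0 ≤ γ) (hγ1 : γ < 1) :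
    IsUnit (1 - γ • P).det := by
  refine isUnit_iff_ne_zero.mpr fun hdet => ?_
  obtain ⟨v, hv, hAv⟩ := exists_mulVec_eq_zero_iff.mpr hdet
  have := one_sub_mul_norm_le_norm_one_sub_smul_mulVec hP hγ0 v
  rw [hAv, norm_zero] at this
  exact hv (norm_le_zero_iff.mp (nonpos_of_mul_nonpos_right this (by linarith)))

theorem mulVec_inv_one_sub_smul_mulVec (hP : P ∈ rowStochastic ℝ X) (hγ0 : 0 ≤ γ)
    (hγ1 : γ < 1) (w : X → ℝ) : (1 - γ • P) *ᵥ ((1 - γ • P)⁻¹ *ᵥ w) = w := by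
  rw [mulVec_mulVec, mul_nonsing_inv _ (isUnit_det_one_sub_smul hP hγ0 hγ1), one_mulVec]

theorem norm_inv_one_sub_smul_mulVec_le (hP : P ∈ rowStochastic ℝ X) (hγ0 : 0 ≤ γ)
    (hγ1 : γ < 1) (r : X → ℝ) : ‖(1 - γ • P)⁻¹ *ᵥ r‖ ≤ ‖r‖ / (1 - γ) := by
  rw [le_div_iff₀ (sub_pos.mpr hγ1), mul_comm]
  have := one_sub_mul_norm_le_norm_one_sub_smul_mulVec hP hγ0 ((1 - γ • P)⁻¹ *ᵥ r)
  rwa [mulVec_inv_one_sub_smul_mulVec hP hγ0 hγ1] at this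

theorem nonneg_of_nonneg_one_sub_smul_mulVec (hP : P ∈ rowStochastic ℝ X) (hγ0 : 0 ≤ γ)
    (hγ1 : γ < 1) {u : X → ℝ} (h : 0 ≤ (1 - γ • P) *ᵥ u) : 0 ≤ u := by
  intro x
  have : Nonempty X := ⟨x⟩
  obtain ⟨x₀, hmin⟩ := Finite.exists_min u
  have hPu : u x₀ ≤ (P *ᵥ u) x₀ := by
    have := nonneg_mulVec_of_mem_rowStochastic hP (x := u - u x₀ • 1)
      (fun y => sub_nonneg.mpr (by simpa using hmin y)) x₀
    rwa [mulVec_sub, mulVec_smul, one_vecMul_of_mem_rowStochastic hP, Pi.sub_apply,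
      Pi.smul_apply, Pi.one_apply, smul_eq_mul, mul_one, sub_nonneg] at this
  have hx₀ : 0 ≤ u x₀ - γ * (P *ᵥ u) x₀ := by simpa [one_sub_smul_mulVec] using h x₀
  have : 0 ≤ u x₀ := by nlinarith
  exact this.trans (hmin x)

theorem inv_one_sub_smul_mulVec_mono (hP : P ∈ rowStochastic ℝ X) (hγ0 : 0 ≤ γ)
    (hγ1 : γ < 1) {w w' : X → ℝ} (h : w ≤ w') :
    (1 - γ • P)⁻¹ *ᵥ w ≤ (1 - γ • P)⁻¹ *ᵥ w' := by
  have := nonneg_of_nonneg_one_sub_smul_mulVec hP hγ0 hγ1 (u := (1 - γ • P)⁻¹ *ᵥ (w' - w))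
    (by rw [mulVec_inv_one_sub_smul_mulVec hP hγ0 hγ1]; exact sub_nonneg.mpr h)
  rwa [mulVec_sub, sub_nonneg] at this

end Matrix

theorem value_difference_bound_general {X : Type*} [Fintype X] [DecidableEq X]
    (P1 P2 : Matrix X X ℝ)
    (hP1 : (∀ x y, 0 ≤ P1 x y) ∧ ∀ x, ∑ y, P1 x y = 1)
    (hP2 : (∀ x y, 0 ≤ P2 x y) ∧ ∀ x, ∑ y, P2 x y = 1)
    (r1 r2 : X → ℝ) (γ Rmax : ℝ) (hγ : γ ∈ Set.Ioo (0:ℝ) 1)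
    (hr2 : ∀ x, |r2 x| ≤ Rmax)
    (e : X → ℝ) (he : ∀ x, ∑ y, |P1 x y - P2 x y| ≤ e x)
    (v1 v2 : X → ℝ)
    (hv1 : v1 = ((1 - γ • P1)⁻¹).mulVec r1)
    (hv2 : v2 = ((1 - γ • P2)⁻¹).mulVec r2) :
    ∀ x,
      ((1 - γ • P1)⁻¹).mulVec (fun y => r1 y - r2 y - γ * Rmax / (1 - γ) * e y) x
        ≤ v1 x - v2 x
      ∧ v1 x - v2 x
        ≤ ((1 - γ • P1)⁻¹).mulVec (fun y => r1 y - r2 y + γ * Rmax / (1 - γ) * e y) x := by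
  obtain ⟨hγ0, hγ1⟩ := hγ
  have hS1 := mem_rowStochastic_iff_sum.mpr hP1
  have hS2 := mem_rowStochastic_iff_sum.mpr hP2
  have hAv1 : (1 - γ • P1) *ᵥ v1 = r1 := hv1 ▸ mulVec_inv_one_sub_smul_mulVec hS1 hγ0.le hγ1 r1
  have hBv2 : (1 - γ • P2) *ᵥ v2 = r2 := hv2 ▸ mulVec_inv_one_sub_smul_mulVec hS2 hγ0.le hγ1 r2
  have hdiff : v1 - v2 = (1 - γ • P1)⁻¹ *ᵥ (r1 - r2 + γ • ((P1 - P2) *ᵥ v2)) := by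
    rw [← hAv1, ← hBv2, ← one_sub_smul_mulVec_sub, mulVec_mulVec,
      nonsing_inv_mul _ (isUnit_det_one_sub_smul hS1 hγ0.le hγ1), one_mulVec]
  intro x
  have hr2_le : ‖r2‖ ≤ Rmax := (pi_norm_le_iff_of_nonneg ((abs_nonneg _).trans (hr2 x))).mpr hr2
  have hv2_le : ‖v2‖ ≤ Rmax / (1 - γ) := hv2 ▸
    (norm_inv_one_sub_smul_mulVec_le hS2 hγ0.le hγ1 r2).trans
      (div_le_div_of_nonneg_right hr2_le (sub_pos.mpr hγ1).le)
  have hpert : ∀ y, |(γ • ((P1 - P2) *ᵥ v2)) y| ≤ γ * Rmax / (1 - γ) * e y := by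
    intro y
    have he0 : 0 ≤ e y := (Finset.sum_nonneg fun z _ => abs_nonneg _).trans (he y)
    calc |(γ • ((P1 - P2) *ᵥ v2)) y| = γ * |((P1 - P2) *ᵥ v2) y| := by
          rw [Pi.smul_apply, smul_eq_mul, abs_mul, abs_of_pos hγ0]
      _ ≤ γ * ((∑ z, |P1 y z - P2 y z|) * ‖v2‖) := by gcongr; exact abs_mulVec_apply_le _ _ _
      _ ≤ γ * (e y * (Rmax / (1 - γ))) := by gcongr; exact he y
      _ = γ * Rmax / (1 - γ) * e y := by ring
  rw [← Pi.sub_apply v1 v2 x, hdiff]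
  refine ⟨inv_one_sub_smul_mulVec_mono hS1 hγ0.le hγ1 (fun y => ?_) x,
    inv_one_sub_smul_mulVec_mono hS1 hγ0.le hγ1 (fun y => ?_) x⟩ <;>
  · simp only [Pi.add_apply, Pi.sub_apply]
    linarith [(abs_le.mp (hpert y)).1, (abs_le.mp (hpert y)).2]

/-- value-function difference bound between two MDP models. -/
theorem value_difference_bound {X : Type*} [Fintype X] [DecidableEq X] [Nonempty X]
    (P1 P2 : Matrix X X ℝ)
    (hP1 : (∀ x y, 0 ≤ P1 x y) ∧ ∀ x, ∑ y, P1 x y = 1)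
    (hP2 : (∀ x y, 0 ≤ P2 x y) ∧ ∀ x, ∑ y, P2 x y = 1)
    (r1 r2 : X → ℝ) (γ Rmax : ℝ) (hγ : γ ∈ Set.Ioo (0:ℝ) 1)
    (hr1 : ∀ x, |r1 x| ≤ Rmax) (hr2 : ∀ x, |r2 x| ≤ Rmax)
    (e : X → ℝ) (he : ∀ x, ∑ y, |P1 x y - P2 x y| ≤ e x)
    (v1 v2 : X → ℝ)
    (hv1 : v1 = ((1 - γ • P1)⁻¹).mulVec r1)
    (hv2 : v2 = ((1 - γ • P2)⁻¹).mulVec r2) :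
    ∀ x,
      ((1 - γ • P1)⁻¹).mulVec (fun y => r1 y - r2 y - γ * Rmax / (1 - γ) * e y) x
        ≤ v1 x - v2 x
      ∧ v1 x - v2 x
        ≤ ((1 - γ • P1)⁻¹).mulVec (fun y => r1 y - r2 y + γ * Rmax / (1 - γ) * e y) x :=
  value_difference_bound_general P1 P2 hP1 hP2 r1 r2 γ Rmax hγ hr2 e he v1 v2 hv1 hv2
end

section
/- Suppose the true model P* lies in the uncertainty set Ξ, and π_S maximizes min_{ξ∈Ξ}(ρ(π,ξ) - ρ(π_B,ξ)). Then the performance loss of π_S satisfies ρ(π*, P*) - ρ(π_S, P*) ≤ max_{ξ∈Ξ}(ρ(π*,P*) - ρ(π*,ξ)) + max_{ξ∈Ξ}(ρ(π_B,ξ) - ρ(π_B,P*)), where π* is an optimal policy for P*. -/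
theorem sub_sub_ciSup_add_ciSup_le_ciInf_sub {ι : Type*} [Nonempty ι] [Finite ι]
    (f g : ι → ℝ) (a b : ℝ) :
    (a - b) - ((⨆ i, (a - f i)) + ⨆ i, (g i - b)) ≤ ⨅ i, (f i - g i) :=
  le_ciInf fun i => by
    have hf := le_ciSup (Finite.bddAbove_range fun i => a - f i) i
    have hg := le_ciSup (Finite.bddAbove_range fun i => g i - b) i
    linarith

theorem regret_maximizer_performance_loss_general {Pol Mdl : Type*}
    [Fintype Mdl]
    (ρ : Pol → Mdl → ℝ) (πB πstar πS : Pol) (Pstar : Mdl)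
    (hmax : ∀ π : Pol, (⨅ ξ : Mdl, (ρ π ξ - ρ πB ξ)) ≤ ⨅ ξ : Mdl, (ρ πS ξ - ρ πB ξ)) :
    ρ πstar Pstar - ρ πS Pstar
      ≤ (⨆ ξ : Mdl, (ρ πstar Pstar - ρ πstar ξ)) + ⨆ ξ : Mdl, (ρ πB ξ - ρ πB Pstar) := by
  have : Nonempty Mdl := ⟨Pstar⟩
  have hS : (⨅ ξ, (ρ πS ξ - ρ πB ξ)) ≤ ρ πS Pstar - ρ πB Pstar :=
    ciInf_le (Finite.bddBelow_range _) Pstar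
  have hstar := sub_sub_ciSup_add_ciSup_le_ciInf_sub (ρ πstar) (ρ πB) (ρ πstar Pstar) (ρ πB Pstar)
  linarith [hmax πstar]

/-- performance-loss decomposition for a robust baseline-regret maximizer. -/
theorem regret_maximizer_performance_loss {Pol Mdl : Type*}
    [Fintype Pol] [Fintype Mdl] [Nonempty Pol] [Nonempty Mdl]
    (ρ : Pol → Mdl → ℝ) (πB πstar πS : Pol) (Pstar : Mdl)
    (hopt : ∀ π : Pol, ρ π Pstar ≤ ρ πstar Pstar)
    (hmax : ∀ π : Pol, (⨅ ξ : Mdl, (ρ π ξ - ρ πB ξ)) ≤ ⨅ ξ : Mdl, (ρ πS ξ - ρ πB ξ)) :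
    ρ πstar Pstar - ρ πS Pstar
      ≤ (⨆ ξ : Mdl, (ρ πstar Pstar - ρ πstar ξ)) + ⨆ ξ : Mdl, (ρ πB ξ - ρ πB Pstar) :=
  regret_maximizer_performance_loss_general ρ πB πstar πS Pstar hmax
end

section
/- Robust algorithm performance bound: assume P* ∈ Ξ, and for every policy π, ρ(π,P*) - min_{ξ∈Ξ} ρ(π,ξ) ≤ B(π) for a given bound function B. Let π_R be the output of the robust algorithm (π_0 = argmax_π min_ξ ρ(π,ξ) if min_ξ ρ(π_0,ξ) > max_ξ ρ(π_B,ξ), else π_B). Then ρ(π*,P*) - ρ(π_R,P*) ≤ min{ B(π*) + B(π_B), ρ(π*,P*) - ρ(π_B,P*) }. -/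
/-! If `π₀` is returned, its robust value beats the robust value of `π*`, which is within `B π*`
of `ρ(π*, P*)`; if `π_B` is returned, the worst case of `π₀` does not exceed the best case of `π_B`,
which is within `B π_B` of `ρ(π_B, P*)`. Either way the loss is at most `B π* + B π_B`, and the
second bound holds because `π₀` is returned only when it provably beats `π_B` on `P*`. -/

open Set

section DeviationBound

variable {ι : Type*} {f : ι → ℝ} {i : ι} {b : ℝ}

theorem bddBelow_range_of_abs_sub_le (h : ∀ j, |f j - f i| ≤ b) : BddBelow (range f) :=
  ⟨f i - b, forall_mem_range.2 fun j => by linarith [(abs_le.1 (h j)).1]⟩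

theorem bddAbove_range_of_abs_sub_le (h : ∀ j, |f j - f i| ≤ b) : BddAbove (range f) :=
  ⟨f i + b, forall_mem_range.2 fun j => by linarith [(abs_le.1 (h j)).2]⟩

theorem sub_le_ciInf_of_abs_sub_le (h : ∀ j, |f j - f i| ≤ b) : f i - b ≤ ⨅ j, f j :=
  haveI : Nonempty ι := ⟨i⟩
  le_ciInf fun j => by linarith [(abs_le.1 (h j)).1]

theorem ciSup_le_add_of_abs_sub_le (h : ∀ j, |f j - f i| ≤ b) : ⨆ j, f j ≤ f i + b :=
  haveI : Nonempty ι := ⟨i⟩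
  ciSup_le fun j => by linarith [(abs_le.1 (h j)).2]

end DeviationBound

theorem robust_algorithm_performance_general {Pol Mdl : Type*}
    (ρ : Pol → Mdl → ℝ) (B : Pol → ℝ) (πB πstar π0 πR : Pol) (Pstar : Mdl)
    (hB : ∀ (π : Pol) (ξ : Mdl), |ρ π ξ - ρ π Pstar| ≤ B π)
    (hπ0 : ∀ π : Pol, (⨅ ξ : Mdl, ρ π ξ) ≤ ⨅ ξ : Mdl, ρ π0 ξ)
    (hπR : ((⨆ ξ : Mdl, ρ πB ξ) < (⨅ ξ : Mdl, ρ π0 ξ) ∧ πR = π0) ∨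
           (¬ (⨆ ξ : Mdl, ρ πB ξ) < (⨅ ξ : Mdl, ρ π0 ξ) ∧ πR = πB)) :
    ρ πstar Pstar - ρ πR Pstar
      ≤ min (B πstar + B πB) (ρ πstar Pstar - ρ πB Pstar) := by
  have hB_nonneg : 0 ≤ B πB := (abs_nonneg _).trans (hB πB Pstar)
  have hstar_le_π0 : ρ πstar Pstar - B πstar ≤ ⨅ ξ, ρ π0 ξ :=
    (sub_le_ciInf_of_abs_sub_le (hB πstar)).trans (hπ0 πstar)
  have hπ0_le : ⨅ ξ, ρ π0 ξ ≤ ρ π0 Pstar := ciInf_le (bddBelow_range_of_abs_sub_le (hB π0)) Pstar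
  have hle_πB : ρ πB Pstar ≤ ⨆ ξ, ρ πB ξ := le_ciSup (bddAbove_range_of_abs_sub_le (hB πB)) Pstar
  have hπB_le : ⨆ ξ, ρ πB ξ ≤ ρ πB Pstar + B πB := ciSup_le_add_of_abs_sub_le (hB πB)
  rcases hπR with ⟨hlt, rfl⟩ | ⟨hge, rfl⟩
  · exact le_min (by linarith) (by linarith)
  · exact le_min (by linarith [not_lt.1 hge]) le_rfl

/-- performance bound for the robust algorithm's output. -/
theorem robust_algorithm_performance {Pol Mdl : Type*}
    [Fintype Pol] [Fintype Mdl] [Nonempty Pol] [Nonempty Mdl]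
    (ρ : Pol → Mdl → ℝ) (B : Pol → ℝ) (πB πstar π0 πR : Pol) (Pstar : Mdl)
    (hB : ∀ (π : Pol) (ξ : Mdl), |ρ π ξ - ρ π Pstar| ≤ B π)
    (hopt : ∀ π : Pol, ρ π Pstar ≤ ρ πstar Pstar)
    (hπ0 : ∀ π : Pol, (⨅ ξ : Mdl, ρ π ξ) ≤ ⨅ ξ : Mdl, ρ π0 ξ)
    (hπR : ((⨆ ξ : Mdl, ρ πB ξ) < (⨅ ξ : Mdl, ρ π0 ξ) ∧ πR = π0) ∨
           (¬ (⨆ ξ : Mdl, ρ πB ξ) < (⨅ ξ : Mdl, ρ π0 ξ) ∧ πR = πB)) :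
    ρ πstar Pstar - ρ πR Pstar
      ≤ min (B πstar + B πB) (ρ πstar Pstar - ρ πB Pstar) :=
  robust_algorithm_performance_general ρ B πB πstar π0 πR Pstar hB hπ0 hπR
end
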